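/- Let K ≥ 2 be an integer and let β > 1. Then min{ ‖v‖_β : v ∈ T^K } = 2^{−1}·( ⌊K/2⌋^{1−β} + ⌈K/2⌉^{1−β} )^{1/β}, where ‖v‖_β = (Σ_{k=1}^K |v_k|^β)^{1/β} and T^K = {v ∈ ℝ^K : ‖v‖₁ = 1 and Σ_{k=1}^K v_k = 0}. Moreover, the minimum is attained at the vector v with v_k = 1/(2⌊K/2⌋) for 1 ≤ k ≤ ⌊K/2⌋ and v_k = −1/(2⌈K/2⌉) for ⌊K/2⌋ < k ≤ K. -/

import Mathlib

open Finset Real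

/-- The α-Tsallis entropy on the positive orthant (Shannon for α = 1, Burg for α = 0). -/
noncomputable def tsallis (α : ℝ) {K : ℕ} (p : Fin K → ℝ) : ℝ :=
  if α = 0 then ∑ k, Real.log (p k)
  else if α = 1 then -∑ k, p k * Real.log (p k)
  else (∑ k, p k ^ α) / (α * (1 - α))

/-- The gradient of the α-Tsallis entropy on the positive orthant. -/
noncomputable def tsallisGrad (α : ℝ) {K : ℕ} (q : Fin K → ℝ) (k : Fin K) : ℝ :=
  if α = 0 then 1 / q k
  else if α = 1 then -(1 + Real.log (q k))
  else -(q k ^ (α - 1)) / (α - 1)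

/-- The Bregman divergence D_α of the negative α-Tsallis entropy:
`D_α(p‖q) = -S_α(p) + S_α(q) + ⟨∇S_α(q), p - q⟩`. -/
noncomputable def breg (α : ℝ) {K : ℕ} (p q : Fin K → ℝ) : ℝ :=
  -tsallis α p + tsallis α q + ∑ k, tsallisGrad α q k * (p k - q k)

/-- The relative interior of the probability simplex Δ^K. -/
def relintSimplex (K : ℕ) : Set (Fin K → ℝ) :=
  {p | (∀ k, 0 < p k ∧ p k < 1) ∧ ∑ k, p k = 1}

/-- The ℓ¹ norm on ℝ^K. -/
noncomputable def l1 {K : ℕ} (x : Fin K → ℝ) : ℝ := ∑ k, |x k|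

/-- Unit ℓ¹-sphere of the tangent space of the simplex. -/
def tangentSphere (K : ℕ) : Set (Fin K → ℝ) :=
  {v | (∑ k, |v k|) = 1 ∧ (∑ k, v k) = 0}

/-- The balanced minimizer: mass +1/2 spread over the first ⌊K/2⌋ coordinates,
mass -1/2 spread over the remaining ⌈K/2⌉ coordinates. -/
noncomputable def vBalanced (K : ℕ) : Fin K → ℝ :=
  fun k => if k.val < K / 2 then 1 / (2 * ((K / 2 : ℕ) : ℝ))
           else -(1 / (2 * (((K + 1) / 2 : ℕ) : ℝ)))

/-!
Split `v` into its nonnegative coordinates `P` and its negative coordinates `N`; each part has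
ℓ¹-mass `1/2`. By the power-mean inequality a part of mass `1/2` spread over `m` coordinates
contributes at least `2^{-β} m^{1-β}` to `∑ |v_k|^β`. As `x ↦ x^{1-β}` is convex, the bound
`2^{-β} (|P|^{1-β} + |N|^{1-β})` with `|P| + |N| = K` is smallest for the balanced split
`⌊K/2⌋ + ⌈K/2⌉`, and `vBalanced` attains it.
-/

lemma convexOn_rpow_of_nonpos {c : ℝ} (hc : c ≤ 0) :
    ConvexOn ℝ (Set.Ioi 0) fun x : ℝ ↦ x ^ c := by
  have hlog : ConvexOn ℝ (Set.Ioi 0) fun x ↦ c * log x := by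
    simpa [smul_eq_mul, neg_mul_neg] using
      strictConcaveOn_log_Ioi.concaveOn.neg.smul (neg_nonneg.2 hc)
  refine ((convexOn_exp.subset (Set.subset_univ _) ?_).comp hlog
    (exp_monotone.monotoneOn _)).congr fun x hx ↦ ?_
  · rw [convex_iff_isPreconnected]
    exact isPreconnected_Ioi.image _ fun x hx ↦
      (continuousAt_log (Set.mem_Ioi.1 hx).ne').const_mul c |>.continuousWithinAt
  · simp [rpow_def_of_pos (Set.mem_Ioi.1 hx), mul_comm]

lemma ConvexOn.map_add_map_le_of_add_eq {s : Set ℝ} {f : ℝ → ℝ} (hf : ConvexOn ℝ s f)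
    {x y a b : ℝ} (hx : x ∈ s) (hy : y ∈ s) (hxa : x ≤ a) (hay : a ≤ y) (hab : a + b = x + y) :
    f a + f b ≤ f x + f y := by
  rcases hxa.eq_or_lt with rfl | hxa
  · rw [show b = y by linarith]
  have hxy : 0 < y - x := by linarith
  set t := (y - a) / (y - x)
  have ht : 0 ≤ t := div_nonneg (by linarith) hxy.le
  have ht' : 0 ≤ 1 - t := by
    rw [one_sub_div hxy.ne']; exact div_nonneg (by linarith) hxy.le
  have ha : t • x + (1 - t) • y = a := by
    simp only [smul_eq_mul, t]; field_simp; ring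
  have hb : (1 - t) • x + t • y = b := by
    rw [show b = x + y - a by linarith]; simp only [smul_eq_mul, t]; field_simp; ring
  have h₁ := hf.2 hx hy ht ht' (by ring)
  have h₂ := hf.2 hx hy ht' ht (by ring)
  rw [ha] at h₁
  rw [hb] at h₂
  simp only [smul_eq_mul] at h₁ h₂
  linarith

lemma rpow_div_two_add_rpow_succ_div_two_le {c : ℝ} (hc : c ≤ 0) {m n : ℕ} (hm : 0 < m) (hn : 0 < n) :
    (((m + n) / 2 : ℕ) : ℝ) ^ c + (((m + n + 1) / 2 : ℕ) : ℝ) ^ c ≤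
      (m : ℝ) ^ c + (n : ℝ) ^ c := by
  wlog hmn : m ≤ n generalizing m n
  · rw [add_comm m, add_comm ((m : ℝ) ^ c)]
    exact this hn hm (by omega)
  refine (convexOn_rpow_of_nonpos hc).map_add_map_le_of_add_eq (by simpa) (by simpa) ?_ ?_ ?_
  · exact_mod_cast (by omega : m ≤ (m + n) / 2)
  · exact_mod_cast (by omega : (m + n) / 2 ≤ n)
  · exact_mod_cast (by omega : (m + n) / 2 + (m + n + 1) / 2 = m + n)

lemma card_rpow_mul_sum_rpow_le {ι : Type*} {s : Finset ι} (hs : s.Nonempty) {f : ι → ℝ}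
    (hf : ∀ i ∈ s, 0 ≤ f i) {p : ℝ} (hp : 1 ≤ p) :
    (#s : ℝ) ^ (1 - p) * (∑ i ∈ s, f i) ^ p ≤ ∑ i ∈ s, f i ^ p := by
  have hcard : (0 : ℝ) < #s := by exact_mod_cast hs.card_pos
  calc (#s : ℝ) ^ (1 - p) * (∑ i ∈ s, f i) ^ p
      ≤ (#s : ℝ) ^ (1 - p) * ((#s : ℝ) ^ (p - 1) * ∑ i ∈ s, f i ^ p) := by
        gcongr; exact rpow_sum_le_const_mul_sum_rpow_of_nonneg s hp hf
    _ = ∑ i ∈ s, f i ^ p := by rw [← mul_assoc, ← rpow_add hcard]; simp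

lemma sum_comp_abs_eq {ι : Type*} (s : Finset ι) (v : ι → ℝ) (g : ℝ → ℝ) :
    ∑ k ∈ s, g |v k| = ∑ k ∈ s with 0 ≤ v k, g (v k) + ∑ k ∈ s with ¬0 ≤ v k, g (-v k) := by
  rw [← sum_filter_add_sum_filter_not s fun k ↦ 0 ≤ v k]
  congr 1 <;> refine sum_congr rfl fun k hk ↦ ?_ <;> rw [mem_filter] at hk
  · rw [abs_of_nonneg hk.2]
  · rw [abs_of_neg (not_le.1 hk.2)]

lemma Fin.sum_univ_ite_val_lt {M : Type*} [AddCommMonoid M] {n m : ℕ} (hmn : m ≤ n) (c d : M) :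
    ∑ i : Fin n, (if (i : ℕ) < m then c else d) = m • c + (n - m) • d := by
  have h := card_filter_add_card_filter_not (s := univ) fun i : Fin n ↦ (i : ℕ) < m
  rw [Fin.card_filter_val_lt, card_univ, Fintype.card_fin, min_eq_right hmn] at h
  rw [sum_ite, Finset.sum_const, Finset.sum_const, Fin.card_filter_val_lt, min_eq_right hmn,
    show #{i : Fin n | ¬(i : ℕ) < m} = n - m by omega]

lemma mul_rpow_one_div_two_mul {m : ℝ} (hm : 0 < m) (β : ℝ) :
    m * (1 / (2 * m)) ^ β = 2⁻¹ ^ β * m ^ (1 - β) := by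
  rw [one_div, mul_inv, mul_rpow (by norm_num) (by positivity), inv_rpow hm.le, rpow_sub hm,
    rpow_one]
  field_simp

lemma sum_abs_vBalanced_rpow {K : ℕ} (hK : 2 ≤ K) (β : ℝ) :
    ∑ k, |vBalanced K k| ^ β =
      2⁻¹ ^ β * (((K / 2 : ℕ) : ℝ) ^ (1 - β) + (((K + 1) / 2 : ℕ) : ℝ) ^ (1 - β)) := by
  have ha : (0 : ℝ) < (K / 2 : ℕ) := by exact_mod_cast (by omega : 0 < K / 2)
  have hb : (0 : ℝ) < ((K + 1) / 2 : ℕ) := by exact_mod_cast (by omega : 0 < (K + 1) / 2)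
  simp only [vBalanced, apply_ite (fun x : ℝ ↦ |x| ^ β), abs_neg, abs_of_pos (one_div_pos.2
    (mul_pos two_pos ha)), abs_of_pos (one_div_pos.2 (mul_pos two_pos hb))]
  rw [Fin.sum_univ_ite_val_lt (by omega), show K - K / 2 = (K + 1) / 2 by omega, nsmul_eq_mul,
    nsmul_eq_mul, mul_rpow_one_div_two_mul ha, mul_rpow_one_div_two_mul hb, mul_add]

lemma vBalanced_mem_tangentSphere {K : ℕ} (hK : 2 ≤ K) : vBalanced K ∈ tangentSphere K := by
  have ha : (0 : ℝ) < (K / 2 : ℕ) := by exact_mod_cast (by omega : 0 < K / 2)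
  have hb : (0 : ℝ) < ((K + 1) / 2 : ℕ) := by exact_mod_cast (by omega : 0 < (K + 1) / 2)
  refine ⟨by simpa [one_add_one_eq_two] using sum_abs_vBalanced_rpow hK 1, ?_⟩
  simp only [vBalanced]
  rw [Fin.sum_univ_ite_val_lt (by omega), show K - K / 2 = (K + 1) / 2 by omega,
    nsmul_eq_mul, nsmul_eq_mul]
  field_simp
  ring

lemma half_rpow_mul_le_sum_abs_rpow {K : ℕ} {v : Fin K → ℝ} (hv : v ∈ tangentSphere K) {β : ℝ}
    (hβ : 1 ≤ β) :
    2⁻¹ ^ β * (((K / 2 : ℕ) : ℝ) ^ (1 - β) + (((K + 1) / 2 : ℕ) : ℝ) ^ (1 - β)) ≤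
      ∑ k, |v k| ^ β := by
  obtain ⟨habs, hsum⟩ := hv
  set P : Finset (Fin K) := {k | 0 ≤ v k}
  set N : Finset (Fin K) := {k | ¬0 ≤ v k}
  have hsplit := sum_comp_abs_eq univ v id
  simp only [id, sum_neg_distrib] at hsplit
  have hsum_split := sum_filter_add_sum_filter_not univ (0 ≤ v ·) v
  have hP : ∑ k ∈ P, v k = 2⁻¹ := by linarith
  have hN : ∑ k ∈ N, -v k = 2⁻¹ := by rw [sum_neg_distrib]; linarith
  have hPne : P.Nonempty := nonempty_of_sum_ne_zero (by rw [hP]; norm_num)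
  have hNne : N.Nonempty := nonempty_of_sum_ne_zero (by rw [hN]; norm_num)
  have hcard : #P + #N = K := by
    rw [card_filter_add_card_filter_not, card_univ, Fintype.card_fin]
  calc 2⁻¹ ^ β * (((K / 2 : ℕ) : ℝ) ^ (1 - β) + (((K + 1) / 2 : ℕ) : ℝ) ^ (1 - β))
      ≤ 2⁻¹ ^ β * ((#P : ℝ) ^ (1 - β) + (#N : ℝ) ^ (1 - β)) := by
        refine mul_le_mul_of_nonneg_left ?_ (by positivity)
        simpa only [hcard] using
          rpow_div_two_add_rpow_succ_div_two_le (by linarith) hPne.card_pos hNne.card_pos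
    _ = (#P : ℝ) ^ (1 - β) * (∑ k ∈ P, v k) ^ β + (#N : ℝ) ^ (1 - β) * (∑ k ∈ N, -v k) ^ β := by
        rw [hP, hN]; ring
    _ ≤ ∑ k ∈ P, v k ^ β + ∑ k ∈ N, (-v k) ^ β :=
        add_le_add (card_rpow_mul_sum_rpow_le hPne (fun k hk ↦ (mem_filter.1 hk).2) hβ)
          (card_rpow_mul_sum_rpow_le hNne
            (fun k hk ↦ neg_nonneg.2 (not_le.1 (mem_filter.1 hk).2).le) hβ)
    _ = ∑ k, |v k| ^ β := (sum_comp_abs_eq univ v (· ^ β)).symm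

theorem min_beta_norm_tangent_sphere_beta_gt_one (K : ℕ) (hK : 2 ≤ K)
    (β : ℝ) (hβ : 1 < β) :
    IsLeast {r : ℝ | ∃ v ∈ tangentSphere K, r = (∑ k, |v k| ^ β) ^ (1 / β)}
      (2⁻¹ * (((K / 2 : ℕ) : ℝ) ^ (1 - β) + (((K + 1) / 2 : ℕ) : ℝ) ^ (1 - β)) ^ (1 / β)) ∧
    vBalanced K ∈ tangentSphere K ∧
    (∑ k, |vBalanced K k| ^ β) ^ (1 / β) =
      2⁻¹ * (((K / 2 : ℕ) : ℝ) ^ (1 - β) + (((K + 1) / 2 : ℕ) : ℝ) ^ (1 - β)) ^ (1 / β) := by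
  have hmem := vBalanced_mem_tangentSphere hK
  have hval : (∑ k, |vBalanced K k| ^ β) ^ (1 / β) =
      2⁻¹ * (((K / 2 : ℕ) : ℝ) ^ (1 - β) + (((K + 1) / 2 : ℕ) : ℝ) ^ (1 - β)) ^ (1 / β) := by
    rw [sum_abs_vBalanced_rpow hK, mul_rpow (by positivity) (by positivity),
      ← rpow_mul (by norm_num), mul_one_div_cancel (by linarith), rpow_one]
  refine ⟨⟨⟨_, hmem, hval.symm⟩, ?_⟩, hmem, hval⟩
  rintro r ⟨v, hv, rfl⟩
  rw [← hval, sum_abs_vBalanced_rpow hK]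
  exact rpow_le_rpow (by positivity) (half_rpow_mul_le_sum_abs_rpow hv hβ.le) (by positivity)
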